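/- Let q ≥ 2 and a be coprime integers, suppose an exceptional zero (β₁,χ₁) exists for modulus q, and let x, h be reals with x ≥ 4 and x^{1/2} ≤ h ≤ x. Set λ := (1/h)∫_{x−h}^{x}(1 − χ₁(a)t^{β₁−1}) dt. Then (1/8)·min{1, (1−β₁) log x} < λ < 2. -/

import Mathlib

open Real

/-- An exceptional (Siegel) zero for modulus `q`: a real number `β₁` with
`1 - 1/(50 log q) ≤ β₁ < 1` that is a zero of the `L`-function of a nontrivial real
(quadratic) Dirichlet character `χ₁` mod `q`. -/
def IsExceptionalZero (q : ℕ) [NeZero q] (β₁ : ℝ) (χ₁ : DirichletCharacter ℂ q) : Prop :=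
  χ₁ ≠ 1 ∧ χ₁ ^ 2 = 1 ∧ 1 - 1 / (50 * Real.log q) ≤ β₁ ∧ β₁ < 1 ∧
    DirichletCharacter.LFunction χ₁ (β₁ : ℂ) = 0

/-- `λ = (1/h) ∫_{x-h}^{x} (1 - χ₁(a) t^{β₁ - 1}) dt` (real-valued, since `χ₁(a) ∈ {±1}`). -/
noncomputable def lambdaInt (q : ℕ) (χ₁ : DirichletCharacter ℂ q) (β₁ : ℝ) (a : ℤ)
    (x h : ℝ) : ℝ :=
  (1 / h) * ∫ t in (x - h)..x, (1 - (χ₁ (a : ZMod q)).re * t ^ (β₁ - 1))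

set_option maxHeartbeats 800000 in
/-- Lemma 4.1 of the paper: effective bounds
`(1/8) min{1, (1-β₁) log x} < λ < 2` for `λ = (1/h)∫_{x-h}^x (1 - χ₁(a) t^{β₁-1}) dt`. -/
theorem lambda_effective_bounds (q : ℕ) [NeZero q] (a : ℤ) (β₁ : ℝ)
    (χ₁ : DirichletCharacter ℂ q) (x h : ℝ)
    (hq : 2 ≤ q) (hcop : IsCoprime a (q : ℤ))
    (hexc : IsExceptionalZero q β₁ χ₁)
    (hx : 4 ≤ x) (hh1 : x ^ ((1 : ℝ) / 2) ≤ h) (hh2 : h ≤ x) :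
    (1 / 8) * min 1 ((1 - β₁) * Real.log x) < lambdaInt q χ₁ β₁ a x h ∧
      lambdaInt q χ₁ β₁ a x h < 2 := by
  obtain ⟨hne, hsq, hβlb, hβub, -⟩ := hexc
  have hx0 : (0:ℝ) < x := by linarith
  have hh0 : (0:ℝ) < h := by
    have : (0:ℝ) < x ^ ((1:ℝ)/2) := Real.rpow_pos_of_pos hx0 _
    linarith
  have hxh0 : 0 ≤ x - h := by linarith
  -- β₁ bounds
  have hlog2 : (0.6931 : ℝ) < Real.log 2 := by
    have := Real.log_two_gt_d9; linarith
  have hlogq : Real.log 2 ≤ Real.log q := by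
    apply Real.log_le_log (by norm_num)
    exact_mod_cast hq
  have hδ3 : 1 - β₁ ≤ 3/100 := by
    have h50 : (100:ℝ)/3 ≤ 50 * Real.log q := by nlinarith
    have : 1 / (50 * Real.log q) ≤ 3/100 := by
      rw [div_le_iff₀ (by nlinarith)]; nlinarith
    linarith
  have hδ0 : 0 < 1 - β₁ := by linarith
  have hβpos : (0:ℝ) < β₁ := by linarith
  -- χ₁ a = ±1
  have hunit : IsUnit ((a : ZMod q)) := by
    obtain ⟨u, v, huv⟩ := hcop
    have : ((u : ZMod q)) * ((a:ℤ) : ZMod q) = 1 := by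
      have := congrArg (fun z : ℤ => ((z : ZMod q))) huv
      push_cast at this
      rw [ZMod.natCast_self] at this
      simpa using this
    exact isUnit_iff_exists_inv.mpr ⟨_, by rw [mul_comm]; exact this⟩
  have hzsq : (χ₁ ((a:ℤ) : ZMod q)) ^ 2 = 1 := by
    have h1 : (χ₁ * χ₁) ((a:ℤ) : ZMod q) = 1 := by
      rw [← sq, hsq]; exact MulChar.one_apply hunit
    rw [MulChar.mul_apply] at h1
    rw [sq]; exact h1
  have hz : (χ₁ ((a:ℤ) : ZMod q)).re = 1 ∨ (χ₁ ((a:ℤ) : ZMod q)).re = -1 := by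
    rcases sq_eq_one_iff.mp hzsq with h1 | h1 <;> rw [h1] <;> simp
  set c : ℝ := (χ₁ ((a:ℤ) : ZMod q)).re with hc
  -- compute the integral
  set D : ℝ := x ^ β₁ - (x - h) ^ β₁ with hD
  have hlam : lambdaInt q χ₁ β₁ a x h = 1 - c * D / (β₁ * h) := by
    have hr : (-1:ℝ) < β₁ - 1 := by linarith
    have hβ : β₁ - 1 + 1 = β₁ := by ring
    have hint : ∫ t in (x-h)..x, (1 - c * t ^ (β₁ - 1)) =
        h - c * (D / β₁) := by
      rw [intervalIntegral.integral_sub intervalIntegrable_const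
        ((intervalIntegral.intervalIntegrable_rpow' hr).const_mul c)]
      rw [intervalIntegral.integral_const_mul, integral_rpow (Or.inl hr), hβ]
      simp only [integral_one, hD]
      ring
    rw [lambdaInt, hint]
    field_simp
  -- basic bounds on D
  have hDpos : 0 ≤ D := by
    have := Real.rpow_le_rpow hxh0 (by linarith : x - h ≤ x) hβpos.le
    rw [hD]; linarith
  -- Claim A : D ≤ h * x^(β₁ - 1)
  have hE0 : (0:ℝ) < x ^ (β₁ - 1) := Real.rpow_pos_of_pos hx0 _
  have hclaimA : D ≤ h * x ^ (β₁ - 1) := by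
    set s : ℝ := (x - h) / x with hs
    have hs0 : 0 ≤ s := div_nonneg hxh0 hx0.le
    have hs1 : s ≤ 1 := by rw [hs, div_le_one hx0]; linarith
    have hss : s ≤ s ^ β₁ := by
      rcases eq_or_lt_of_le hs0 with h0 | h0
      · rw [← h0, Real.zero_rpow (by linarith)]
      · calc s = s ^ (1:ℝ) := (Real.rpow_one s).symm
          _ ≤ s ^ β₁ := Real.rpow_le_rpow_of_exponent_ge h0 hs1 (by linarith)
    have hxh : x - h = x * s := by rw [hs]; field_simp
    have hmul : (x - h) ^ β₁ = x ^ β₁ * s ^ β₁ := by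
      rw [hxh, Real.mul_rpow hx0.le hs0]
    have hEd : x ^ (β₁ - 1) = x ^ β₁ / x := by
      rw [Real.rpow_sub hx0, Real.rpow_one]
    have hxβ : 0 < x ^ β₁ := Real.rpow_pos_of_pos hx0 _
    have hm : x ^ β₁ * s ≤ x ^ β₁ * s ^ β₁ :=
      mul_le_mul_of_nonneg_left hss hxβ.le
    rw [hD, hmul, hEd]
    calc x ^ β₁ - x ^ β₁ * s ^ β₁ ≤ x ^ β₁ - x ^ β₁ * s := by linarith
      _ = x ^ β₁ * (h / x) := by rw [hs]; field_simp; ring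
      _ = h * (x ^ β₁ / x) := by ring
  -- exp facts
  set u : ℝ := (1 - β₁) * Real.log x with hu
  have hEdef : x ^ (β₁ - 1) = Real.exp (-u) := by
    rw [hu, Real.rpow_def_of_pos hx0]; congr 1; ring
  have hL4 : (1.386 : ℝ) ≤ Real.log x := by
    have h4 : Real.log 4 ≤ Real.log x := Real.log_le_log (by norm_num) hx
    have : Real.log 4 = 2 * Real.log 2 := by
      rw [show (4:ℝ) = 2^2 by norm_num, Real.log_pow]; push_cast; ring
    nlinarith
  have hu0 : 0 < u := by
    rw [hu]; exact mul_pos hδ0 (by linarith)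
  have hδu : 1.386 * (1 - β₁) ≤ u := by
    rw [hu]; nlinarith
  have hexp : Real.exp (-u) * (1 + u) ≤ 1 := by
    have h1 : 1 + u ≤ Real.exp u := by have := Real.add_one_le_exp u; linarith
    have h2 : Real.exp (-u) * Real.exp u = 1 := by rw [← Real.exp_add]; simp
    nlinarith [Real.exp_pos (-u)]
  -- K1 : x^(β₁-1) < β₁
  have hK1 : x ^ (β₁ - 1) < β₁ := by
    rw [hEdef]
    nlinarith [Real.exp_pos (-u), hexp, hδu, hδ3, hδ0, hu0]
  -- D / (β₁ * h) < 1
  have hβh : 0 < β₁ * h := mul_pos hβpos hh0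
  have hDlt : D / (β₁ * h) < 1 := by
    rw [div_lt_one hβh]
    calc D ≤ h * x ^ (β₁ - 1) := hclaimA
      _ < h * β₁ := mul_lt_mul_of_pos_left hK1 hh0
      _ = β₁ * h := by ring
  have hDEβ : D / (β₁ * h) ≤ x ^ (β₁ - 1) / β₁ := by
    rw [div_le_div_iff₀ hβh hβpos]
    calc D * β₁ ≤ h * x ^ (β₁ - 1) * β₁ := by nlinarith
      _ = x ^ (β₁ - 1) * (β₁ * h) := by ring
  have hmin : min 1 u ≤ 1 := min_le_left _ _
  have hminpos : 0 < min 1 u := lt_min one_pos hu0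
  rcases hz with h1 | h1
  · -- c = 1 : λ = 1 - D/(β₁ h)
    rw [hlam, h1]
    constructor
    · -- lower bound
      have key : (1/8) * min 1 u < 1 - Real.exp (-u) / β₁ := by
        rcases le_or_gt 1 u with hcase | hcase
        · rw [min_eq_left hcase]
          have hE1 : Real.exp (-u) ≤ Real.exp (-1) := by
            apply Real.exp_le_exp.mpr; linarith
          have he2 : (2:ℝ) ≤ Real.exp 1 := by
            have := Real.add_one_le_exp 1; linarith
          have hEhalf : Real.exp (-1) ≤ 1/2 := by
            rw [Real.exp_neg, inv_le_comm₀ (Real.exp_pos 1) (by norm_num)]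
            linarith
          have hlt : Real.exp (-u) / β₁ < 7/8 := by
            rw [div_lt_iff₀ hβpos]; nlinarith
          linarith
        · rw [min_eq_right hcase.le]
          have hkey2 : Real.exp (-u) < β₁ * (1 - u/8) := by
            rcases le_or_gt u (1/5) with hc2 | hc2
            · nlinarith [hexp, hδu, hu0, Real.exp_pos (-u),
                mul_pos hu0 hu0, mul_nonneg (mul_nonneg hu0.le hu0.le) hu0.le]
            · nlinarith [hexp, hδ3, hu0, hcase, Real.exp_pos (-u),
                mul_pos hu0 hu0, mul_nonneg hδ0.le hu0.le]
          have hlt : Real.exp (-u) / β₁ < 1 - u/8 := by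
            rw [div_lt_iff₀ hβpos]; nlinarith [hkey2]
          linarith
      have : Real.exp (-u) / β₁ ≥ 1 * D / (β₁ * h) := by
        rw [← hEdef]; rw [one_mul, ← div_div]
        calc D / β₁ / h = D / (β₁ * h) := by rw [div_div]
          _ ≤ x ^ (β₁-1) / β₁ := hDEβ
      linarith
    · -- upper bound : λ ≤ 1 < 2
      have h0 : 0 ≤ D / (β₁ * h) := div_nonneg hDpos hβh.le
      rw [one_mul]
      linarith
  · -- c = -1 : λ = 1 + D/(β₁ h)
    rw [hlam, h1]
    have heq : -1 * D / (β₁ * h) = -(D / (β₁ * h)) := by ring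
    rw [heq]
    constructor
    · have h0 : 0 ≤ D / (β₁ * h) := div_nonneg hDpos hβh.le
      nlinarith
    · linarith
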